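/- Let μ ∈ ℝⁿ have nonnegative components, ν ∈ ℝ^{n×n} full rank, Σ := ννᵀ, and let ī be an index minimizing μ_i/√(Σ_ii). Then the standard basis vector e_{ī} attains the infimum of (α·μ)/‖αᵀν‖ over nonnegative nonzero α, i.e. (e_{ī}·μ)/‖e_{ī}ᵀν‖ = min_{i} μ_i/√(Σ_ii). -/

import Mathlib

open Matrix

noncomputable def enorm {n : ℕ} (x : Fin n → ℝ) : ℝ := Real.sqrt (x ⬝ᵥ x)

noncomputable def tvsObj {n : ℕ} (μ : Fin n → ℝ) (ν : Matrix (Fin n) (Fin n) ℝ)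
    (α : Fin n → ℝ) : ℝ := (α ⬝ᵥ μ) / _root_.enorm (vecMul α ν)

/-!
Writing `αᵀν = ∑ᵢ αᵢ νᵢ` as a nonnegative combination of the rows `νᵢ` of `ν`, the triangle
inequality gives `‖αᵀν‖ ≤ ∑ᵢ αᵢ ‖νᵢ‖ = ∑ᵢ αᵢ √Σᵢᵢ`. With `c = μ_ī / √Σ_īī` minimal among the
ratios `μᵢ / √Σᵢᵢ` we have `c √Σᵢᵢ ≤ μᵢ`, so `c ‖αᵀν‖ ≤ α ⬝ μ`; full rank of `ν` makes `‖αᵀν‖`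
positive for `α ≠ 0`, and dividing by it shows that `e_ī` is a minimizer.
-/

lemma enorm_eq_norm_toLp {n : ℕ} (x : Fin n → ℝ) : _root_.enorm x = ‖WithLp.toLp 2 x‖ := by
  simp [_root_.enorm, EuclideanSpace.norm_eq, dotProduct, sq]

lemma enorm_pos_of_ne_zero {n : ℕ} {x : Fin n → ℝ} (hx : x ≠ 0) : 0 < _root_.enorm x := by
  rw [enorm_eq_norm_toLp]
  exact norm_pos_iff.mpr (by simpa using hx)

lemma enorm_vecMul_le {m n : ℕ} (α : Fin m → ℝ) (ν : Matrix (Fin m) (Fin n) ℝ) :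
    _root_.enorm (α ᵥ* ν) ≤ ∑ i, |α i| * _root_.enorm (ν i) := by
  simp only [enorm_eq_norm_toLp, vecMul_eq_sum, WithLp.toLp_sum, WithLp.toLp_smul]
  exact (norm_sum_le _ _).trans_eq (by simp [norm_smul])

lemma sqrt_mul_transpose_apply_self {m n : ℕ} (ν : Matrix (Fin m) (Fin n) ℝ) (i : Fin m) :
    Real.sqrt ((ν * νᵀ) i i) = _root_.enorm (ν i) :=
  rfl

lemma mul_enorm_vecMul_le_dotProduct {m n : ℕ} {μ α : Fin m → ℝ} {ν : Matrix (Fin m) (Fin n) ℝ}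
    {c : ℝ} (hc : 0 ≤ c) (hα : 0 ≤ α) (h : ∀ i, c * _root_.enorm (ν i) ≤ μ i) :
    c * _root_.enorm (α ᵥ* ν) ≤ α ⬝ᵥ μ :=
  calc c * _root_.enorm (α ᵥ* ν) ≤ c * ∑ i, α i * _root_.enorm (ν i) := by
        gcongr
        simpa only [abs_of_nonneg (hα _)] using enorm_vecMul_le α ν
    _ = ∑ i, α i * (c * _root_.enorm (ν i)) := by
        rw [Finset.mul_sum]
        exact Finset.sum_congr rfl fun i _ => by ring
    _ ≤ ∑ i, α i * μ i := by
        gcongr with i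
        · exact hα i
        · exact h i
    _ = α ⬝ᵥ μ := rfl

lemma tvsObj_single_one {n : ℕ} (μ : Fin n → ℝ) (ν : Matrix (Fin n) (Fin n) ℝ) (i : Fin n) :
    tvsObj μ ν (Pi.single i 1) = μ i / _root_.enorm (ν i) := by
  rw [tvsObj, single_one_vecMul, single_one_dotProduct, row]

lemma tvsObj_single_one_le {n : ℕ} {μ : Fin n → ℝ} {ν : Matrix (Fin n) (Fin n) ℝ}
    (hν : IsUnit ν.det) {i₀ : Fin n} (hμ : 0 ≤ μ i₀)
    (hmin : ∀ i, μ i₀ / _root_.enorm (ν i₀) ≤ μ i / _root_.enorm (ν i))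
    {α : Fin n → ℝ} (hα : 0 ≤ α) (hα0 : α ≠ 0) :
    tvsObj μ ν (Pi.single i₀ 1) ≤ tvsObj μ ν α := by
  have hinj : Function.Injective ν.vecMul :=
    vecMul_injective_iff_isUnit.mpr ((isUnit_iff_isUnit_det ν).mpr hν)
  have hrow : ∀ i, 0 < _root_.enorm (ν i) := fun i => enorm_pos_of_ne_zero <| by
    simpa [row] using hinj.ne (a₁ := Pi.single i 1) (a₂ := 0) (by simp)
  have hαν : 0 < _root_.enorm (α ᵥ* ν) :=
    enorm_pos_of_ne_zero fun h => hα0 (hinj (h.trans (zero_vecMul ν).symm))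
  rw [tvsObj_single_one, tvsObj, le_div_iff₀ hαν]
  exact mul_enorm_vecMul_le_dotProduct (div_nonneg hμ (hrow i₀).le) hα
    fun i => (le_div_iff₀ (hrow i)).mp (hmin i)

theorem stmt3 {n : ℕ} (μ : Fin n → ℝ) (hμ : ∀ i, 0 ≤ μ i)
    (ν : Matrix (Fin n) (Fin n) ℝ) (hν : IsUnit ν.det)
    (Sig : Matrix (Fin n) (Fin n) ℝ) (hSig : Sig = ν * νᵀ)
    (ibar : Fin n)
    (hibar : ∀ i, μ ibar / Real.sqrt (Sig ibar ibar) ≤ μ i / Real.sqrt (Sig i i)) :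
    tvsObj μ ν (Pi.single ibar 1) = μ ibar / Real.sqrt (Sig ibar ibar) ∧
    ∀ α : Fin n → ℝ, (∀ i, 0 ≤ α i) → α ≠ 0 →
      tvsObj μ ν (Pi.single ibar 1) ≤ tvsObj μ ν α := by
  subst hSig
  simp only [sqrt_mul_transpose_apply_self] at hibar ⊢
  exact ⟨tvsObj_single_one μ ν ibar,
    fun α hα hα0 => tvsObj_single_one_le hν (hμ ibar) hibar hα hα0⟩
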